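/- Fix a field k. Every simple smooth k[I]-module is isomorphic, as a k[I]-module, to B^n for some n ∈ ℕ. (In particular, every simple smooth k[I]-module is one-dimensional over k.) -/

import Mathlib

open scoped Classical

noncomputable section

/-- The increasing monoid `I`: the submonoid of `Function.End ℕ+` (functions under
composition) consisting of strictly increasing functions `σ : ℕ+ → ℕ+` such that
`σ n = n + ℓ` for some `ℓ` and all sufficiently large `n`. -/
def IncMonoid : Submonoid (Function.End ℕ+) where
  carrier := {f | StrictMono f ∧ ∃ (l : ℕ) (N : ℕ+), ∀ n : ℕ+, N ≤ n → ((f n : ℕ) = (n : ℕ) + l)}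
  one_mem' := ⟨fun _ _ h => h, 0, 1, fun n _ => by show ((n : ℕ+) : ℕ) = (n : ℕ) + 0; omega⟩
  mul_mem' := by
    rintro f g ⟨hf1, lf, Nf, hf2⟩ ⟨hg1, lg, Ng, hg2⟩
    refine ⟨hf1.comp hg1, lg + lf, max Nf Ng, fun n hn => ?_⟩
    have h1 : (g n : ℕ) = (n : ℕ) + lg := hg2 n (le_trans (le_max_right _ _) hn)
    have h2 : Nf ≤ g n := by
      rw [← PNat.coe_le_coe, h1]
      have : (Nf : ℕ) ≤ (n : ℕ) := (PNat.coe_le_coe _ _).2 (le_trans (le_max_left _ _) hn)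
      omega
    have h3 := hf2 (g n) h2
    show ((f (g n) : ℕ)) = (n : ℕ) + (lg + lf)
    omega

/-- The increasing monoid, as a type. -/
abbrev IncM : Type := IncMonoid

theorem IncM.strictMono (σ : IncM) : StrictMono σ.1 := σ.2.1

theorem IncM.le_apply (σ : IncM) (n : ℕ+) : n ≤ σ.1 n := by
  induction n using PNat.recOn with
  | one => exact (σ.1 1).one_le
  | succ n ih =>
      have h2 : σ.1 n < σ.1 (n + 1) := σ.strictMono (by rw [← PNat.coe_lt_coe]; push_cast; omega)
      rw [← PNat.coe_le_coe] at *
      rw [← PNat.coe_lt_coe] at h2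
      push_cast at *
      omega

/-- The underlying function of the generator `α_k`. -/
def alphaFun (k : ℕ+) : Function.End ℕ+ := fun n => if n < k then n else n + 1

theorem alphaFun_strictMono (k : ℕ+) : StrictMono (alphaFun k) := by
  intro a b hab
  unfold alphaFun
  split_ifs with h1 h2 <;>
    rw [← PNat.coe_lt_coe] at * <;> push_cast at * <;> omega

theorem alphaFun_mem (k : ℕ+) : alphaFun k ∈ IncMonoid := by
  refine ⟨alphaFun_strictMono k, 1, k, fun n hn => ?_⟩
  unfold alphaFun
  rw [if_neg (not_lt.2 hn)]
  push_cast
  ring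

/-- The generator `α_k` of the increasing monoid (`k ≥ 1`). -/
def alpha (k : ℕ+) : IncM := ⟨alphaFun k, alphaFun_mem k⟩

/-- The submonoid `I_{≥ n}` of `I` generated by the `α_i` with `i ≥ n`. -/
def Iges (n : ℕ+) : Submonoid IncM := Submonoid.closure (alpha '' Set.Ici n)

/-- The submonoid `I_{> n}` of `I` generated by the `α_i` with `i > n`. -/
def Igt (n : ℕ) : Submonoid IncM := Submonoid.closure {s | ∃ i : ℕ+, n < (i : ℕ) ∧ s = alpha i}

/-- The monoid algebra `k[I]` of the increasing monoid. -/
abbrev IncAlg (k : Type*) [Field k] : Type _ := MonoidAlgebra k IncM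

/-- The image of `σ ∈ I` in the monoid algebra `k[I]`. -/
abbrev ofInc (k : Type*) [Field k] (σ : IncM) : IncAlg k := MonoidAlgebra.of k IncM σ

/-- A `k[I]`-module is smooth if every vector is fixed by some `I_{>n}`. -/
def IsSmoothMod (k : Type*) [Field k] (M : Type*) [AddCommMonoid M]
    [Module (IncAlg k) M] : Prop :=
  ∀ x : M, ∃ n : ℕ, ∀ σ ∈ Igt n, ofInc k σ • x = x

/-! ### The principal modules `A^r` -/

/-- Index set for the basis of the principal module `A^r`:
strictly increasing `r`-tuples of positive integers. -/
def Idx (r : ℕ) : Type := {v : Fin r → ℕ+ // StrictMono v}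

/-- The action of `σ ∈ I` on the index set of `A^r`. -/
def idxAct {r : ℕ} (σ : IncM) (t : Idx r) : Idx r :=
  ⟨σ.1 ∘ t.1, (IncM.strictMono σ).comp t.2⟩

/-- The representation of the increasing monoid on the principal module `A^r`. -/
def prinRep (k : Type*) [Field k] (r : ℕ) : Representation k IncM (Idx r →₀ k) where
  toFun σ := Finsupp.lmapDomain k k (idxAct σ)
  map_one' := LinearMap.ext fun v => by
    have h : (idxAct (1 : IncM) : Idx r → Idx r) = id := funext fun t => rfl
    simp [Finsupp.lmapDomain_apply, h, Finsupp.mapDomain_id]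
  map_mul' := fun σ τ => LinearMap.ext fun v => by
    have h : (idxAct (σ * τ) : Idx r → Idx r) = (idxAct σ) ∘ (idxAct τ) :=
      funext fun t => rfl
    show Finsupp.lmapDomain k k (idxAct (σ * τ)) v =
      Finsupp.lmapDomain k k (idxAct σ) (Finsupp.lmapDomain k k (idxAct τ) v)
    simp [Finsupp.lmapDomain_apply, h, Finsupp.mapDomain_comp]

/-- The principal module `A^r`, as a module over the monoid algebra `k[I]`. -/
abbrev PrinMod (k : Type*) [Field k] (r : ℕ) : Type _ := (prinRep k r).asModule

/-- The basis vector `e_t` of the principal module `A^r`. -/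
def ePrin (k : Type*) [Field k] {r : ℕ} (t : Idx r) : PrinMod k r :=
  (prinRep k r).asModuleEquiv.symm (Finsupp.single t 1)

/-- The tuple `(1, 2, …, r)` indexing the canonical generator `e_{1,…,r}` of `A^r`. -/
def iotaIdx (r : ℕ) : Idx r :=
  ⟨fun i => ⟨(i : ℕ) + 1, Nat.succ_pos _⟩, fun a b h => by
    exact (PNat.coe_lt_coe _ _).1 (Nat.succ_lt_succ h)⟩

/-! ### The simple modules `B^n` -/

/-- `σ ∈ I` fixes the natural number `n`, with the convention `σ 0 = 0`. -/
def fixesNat (σ : IncM) (n : ℕ) : Prop := ∀ h : 0 < n, σ.1 ⟨n, h⟩ = ⟨n, h⟩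

theorem fixesNat_mul (σ τ : IncM) (n : ℕ) :
    fixesNat (σ * τ) n ↔ fixesNat σ n ∧ fixesNat τ n := by
  rcases Nat.eq_zero_or_pos n with h0 | h0
  · subst h0
    constructor
    · exact fun _ => ⟨fun h => absurd h (lt_irrefl 0), fun h => absurd h (lt_irrefl 0)⟩
    · exact fun _ h => absurd h (lt_irrefl 0)
  · set p : ℕ+ := ⟨n, h0⟩
    have happ : ∀ h : 0 < n, (σ * τ).1 ⟨n, h⟩ = σ.1 (τ.1 ⟨n, h⟩) := fun _ => rfl
    constructor
    · intro h
      have hfix : σ.1 (τ.1 p) = p := h h0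
      have h1 : p ≤ τ.1 p := τ.le_apply p
      have h2 : τ.1 p ≤ σ.1 (τ.1 p) := σ.le_apply _
      have hτp : τ.1 p = p := le_antisymm (h2.trans_eq hfix) h1
      have hσp : σ.1 p = p := by rw [hτp] at hfix; exact hfix
      exact ⟨fun _ => hσp, fun _ => hτp⟩
    · rintro ⟨hσ, hτ⟩ h
      rw [happ h]
      have := hτ h0
      rw [this, hσ h0]

/-- The representation of the increasing monoid on the simple module `B^n`:
`σ` acts by the identity if `σ(n) = n` (with `σ(0) = 0`) and by `0` otherwise. -/
def bRep (k : Type*) [Field k] (n : ℕ) : Representation k IncM k where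
  toFun σ := if fixesNat σ n then 1 else 0
  map_one' := by
    rw [if_pos]
    intro h
    rfl
  map_mul' := fun σ τ => by
    by_cases hσ : fixesNat σ n
    · by_cases hτ : fixesNat τ n
      · rw [if_pos ((fixesNat_mul σ τ n).2 ⟨hσ, hτ⟩), if_pos hσ, if_pos hτ, one_mul]
      · rw [if_neg (fun h => hτ ((fixesNat_mul σ τ n).1 h).2), if_pos hσ, if_neg hτ, one_mul]
    · by_cases hτ : fixesNat τ n
      · rw [if_neg (fun h => hσ ((fixesNat_mul σ τ n).1 h).1), if_neg hσ, if_pos hτ, mul_one]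
      · rw [if_neg (fun h => hσ ((fixesNat_mul σ τ n).1 h).1), if_neg hσ, if_neg hτ, mul_zero]

/-- The simple module `B^n`, as a module over the monoid algebra `k[I]`. -/
abbrev BMod (k : Type*) [Field k] (n : ℕ) : Type _ := (bRep k n).asModule

/-!
By smoothness a simple smooth module `M` has a nonzero vector fixed by all `α_j` with `j > n`;
take `n` minimal and `z` such a vector. If some `α_j` with `j ≤ n` did not kill `z`, let `m` be
the least one. Simplicity writes `z = a • α_m ^ c • z` whenever `α_m ^ c • z ≠ 0`, and then
`α_m ^ (c + 1)` cannot kill `z`: each monomial `α_m ^ c σ α_m ^ c` of `α_m ^ c a α_m ^ c`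
either moves a point below `m` (so it kills `z`, since such an element factors as `τ α_i` with
`i < m`) or factors through `α_m ^ (c + 1)`. Hence no power of `α_m` kills `z`. Taking `c`
large, `α_j σ α_m ^ c` and `α_t σ α_m ^ c` (`t = n + 1`) agree on `1, …, n` for `m ≤ j ≤ n`, and
two elements of `I` agreeing on `1, …, n` act equally on `z`; so `z` is fixed by all `α_j` with
`j ≥ m`, contradicting minimality. Consequently `σ • z = z` when `σ` fixes `n` and `σ • z = 0`
otherwise: `k z ≅ B^n`, and `k z = M` by simplicity.
-/

lemma exists_smul_eq_of_ne_zero {R M : Type*} [Ring R] [AddCommGroup M] [Module R M]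
    [IsSimpleModule R M] {u : M} (hu : u ≠ 0) (v : M) : ∃ a : R, a • u = v :=
  IsSimpleModule.toSpanSingleton_surjective R hu v

lemma MonoidAlgebra.mul_smul_eq_mul_smul_of_forall_of {k G M : Type*} [CommSemiring k] [Monoid G]
    [AddCommMonoid M] [Module (MonoidAlgebra k G) M] {x y : MonoidAlgebra k G} {u w : M}
    (h : ∀ g : G, (x * of k G g) • u = (y * of k G g) • w) (a : MonoidAlgebra k G) :
    (x * a) • u = (y * a) • w := by
  induction a using MonoidAlgebra.induction_on with
  | of g => exact h g
  | add a b ha hb => rw [mul_add, mul_add, add_smul, add_smul, ha, hb]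
  | smul r a ha =>
    rw [mul_smul_comm, mul_smul_comm, Algebra.smul_def, Algebra.smul_def, mul_smul _ (x * a),
      mul_smul _ (y * a), ha]

namespace IncM

lemma mul_apply (σ τ : IncM) (p : ℕ+) : (σ * τ).1 p = σ.1 (τ.1 p) := rfl

lemma apply_add_le (σ : IncM) {p q : ℕ+} (h : p ≤ q) : (σ.1 p : ℕ) + (q - p) ≤ σ.1 q := by
  have hf : StrictMono fun i : ℕ => (σ.1 i.succPNat : ℕ) :=
    fun a b hab => σ.strictMono (Nat.succPNat_lt_succPNat.2 hab)
  have key := hf.add_le_nat ((q : ℕ) - p) p.natPred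
  have hq : ((q : ℕ) - p + p.natPred).succPNat = q := by
    apply PNat.eq
    simp only [Nat.succPNat_coe, PNat.natPred]
    have := PNat.coe_le_coe _ _ |>.2 h
    have := p.pos
    omega
  simp only [PNat.succPNat_natPred, hq] at key
  omega

lemma apply_eq_self_of_le (σ : IncM) {p q : ℕ+} (hq : σ.1 q = q) (h : p ≤ q) : σ.1 p = p := by
  have h1 := σ.apply_add_le h
  have h2 := σ.le_apply p
  rw [hq] at h1
  rw [← PNat.coe_le_coe] at h2 h
  exact PNat.eq (by omega)

lemma lt_apply_of_apply_ne (σ : IncM) {p : ℕ+} (h : σ.1 p ≠ p) : p < σ.1 p :=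
  (σ.le_apply p).lt_of_ne' h

lemma mul_mul_apply_ne (φ σ : IncM) {ψ : IncM} {p : ℕ+} (hψ : ψ.1 p = p) (hσ : σ.1 p ≠ p) :
    (φ * σ * ψ).1 p ≠ p := by
  rw [mul_apply, mul_apply, hψ]
  exact ((σ.lt_apply_of_apply_ne hσ).trans_le (φ.le_apply _)).ne'

lemma alpha_apply_eq_alpha_apply {i j p : ℕ+} (h : p < i ↔ p < j) :
    (alpha i).1 p = (alpha j).1 p := by
  simp only [alpha, alphaFun, h]

lemma alpha_pow_apply_of_lt {t p : ℕ+} (c : ℕ) (h : p < t) : (alpha t ^ c).1 p = p := by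
  induction c with
  | zero => rfl
  | succ c ih => rw [pow_succ, mul_apply, show (alpha t).1 p = p from if_pos h, ih]

lemma coe_alpha_pow_apply_of_le {t p : ℕ+} (c : ℕ) (h : t ≤ p) :
    ((alpha t ^ c).1 p : ℕ) = p + c := by
  induction c generalizing p with
  | zero => rfl
  | succ c ih =>
    rw [pow_succ, mul_apply, show (alpha t).1 p = p + 1 from if_neg (not_lt.2 h),
      ih (h.trans (PNat.lt_add_right p 1).le)]
    push_cast
    ring

lemma _root_.Nat.coe_toPNat'_sub {p c : ℕ} (h : c < p) : (((p - c).toPNat' : ℕ+) : ℕ) = p - c :=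
  PNat.toPNat'_coe (by omega)

section StripAlphaPow

variable {ρ : IncM} {m : ℕ+} {c : ℕ}

variable (ρ m c) in
/-- The candidate for `τ` in `ρ = τ * α_m ^ c`. -/
def stripAlphaPow : Function.End ℕ+ :=
  fun p => if (p : ℕ) < m + c then p else ρ.1 (p - c : ℕ).toPNat'

lemma stripAlphaPow_of_lt {p : ℕ+} (hp : (p : ℕ) < m + c) : stripAlphaPow ρ m c p = p :=
  if_pos hp

lemma stripAlphaPow_of_le {p : ℕ+} (hp : m + c ≤ (p : ℕ)) :
    stripAlphaPow ρ m c p = ρ.1 (p - c : ℕ).toPNat' :=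
  if_neg (by omega)

lemma strictMono_stripAlphaPow (hm : (m : ℕ) + c ≤ ρ.1 m) : StrictMono (stripAlphaPow ρ m c) := by
  have := m.pos
  have hge {p : ℕ+} (hp : m + c ≤ (p : ℕ)) : m + c ≤ (stripAlphaPow ρ m c p : ℕ) := by
    have h := ρ.apply_add_le (p := m) (q := (p - c : ℕ).toPNat')
      (by rw [← PNat.coe_le_coe, Nat.coe_toPNat'_sub (by omega)]; omega)
    rw [stripAlphaPow_of_le hp]
    omega
  intro p q hpq
  rw [← PNat.coe_lt_coe] at hpq ⊢
  by_cases hq : (q : ℕ) < m + c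
  · rwa [stripAlphaPow_of_lt (hpq.trans hq), stripAlphaPow_of_lt hq]
  by_cases hp : (p : ℕ) < m + c
  · rw [stripAlphaPow_of_lt hp]
    exact hp.trans_le (hge (not_lt.1 hq))
  rw [stripAlphaPow_of_le (not_lt.1 hp), stripAlphaPow_of_le (not_lt.1 hq), PNat.coe_lt_coe]
  apply ρ.strictMono
  rw [← PNat.coe_lt_coe, Nat.coe_toPNat'_sub (by omega), Nat.coe_toPNat'_sub (by omega)]
  omega

lemma stripAlphaPow_mem (hm : (m : ℕ) + c ≤ ρ.1 m) : stripAlphaPow ρ m c ∈ IncMonoid := by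
  refine ⟨strictMono_stripAlphaPow hm, ?_⟩
  obtain ⟨l, N, hN⟩ := ρ.2.2
  have hcl : c ≤ l := by
    have h1 := ρ.apply_add_le (PNat.lt_add_right m N).le
    have h2 := hN (m + N) (PNat.lt_add_left N m).le
    push_cast at h1 h2
    omega
  refine ⟨l - c, N + m + c.succPNat, fun p hp => ?_⟩
  have hp' : (N : ℕ) + m + c < p := by
    have := PNat.coe_le_coe _ _ |>.2 hp
    push_cast [Nat.succPNat_coe] at this
    omega
  rw [stripAlphaPow_of_le (by omega),
    hN _ (by rw [← PNat.coe_le_coe, Nat.coe_toPNat'_sub (by omega)]; omega),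
    Nat.coe_toPNat'_sub (by omega)]
  omega

lemma exists_eq_mul_alpha_pow (hfix : ∀ p < m, ρ.1 p = p) (hm : (m : ℕ) + c ≤ ρ.1 m) :
    ∃ τ : IncM, ρ = τ * alpha m ^ c := by
  refine ⟨⟨stripAlphaPow ρ m c, stripAlphaPow_mem hm⟩, Subtype.ext (funext fun p => ?_)⟩
  change ρ.1 p = stripAlphaPow ρ m c ((alpha m ^ c).1 p)
  rcases lt_or_ge p m with hp | hp
  · rw [alpha_pow_apply_of_lt c hp,
      stripAlphaPow_of_lt (by rw [← PNat.coe_lt_coe] at hp; omega), hfix p hp]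
  · have h := coe_alpha_pow_apply_of_le c hp
    rw [← PNat.coe_le_coe] at hp
    have := p.pos
    have hback : (((alpha m ^ c).1 p - c : ℕ).toPNat') = p :=
      PNat.eq (by rw [Nat.coe_toPNat'_sub (by omega), h]; omega)
    rw [stripAlphaPow_of_le (by omega), hback]

end StripAlphaPow

lemma exists_eq_mul_alpha_of_apply_ne (σ : IncM) {j : ℕ+} (h : σ.1 j ≠ j) :
    ∃ i ≤ j, ∃ τ : IncM, σ = τ * alpha i := by
  have hex : ∃ p, σ.1 p ≠ p := ⟨j, h⟩
  refine ⟨PNat.find hex, PNat.find_min' hex h, ?_⟩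
  have hlt := σ.lt_apply_of_apply_ne (PNat.find_spec hex)
  rw [← PNat.coe_lt_coe] at hlt
  simpa using exists_eq_mul_alpha_pow (ρ := σ) (c := 1)
    (fun p hp => not_not.1 (PNat.find_min hex hp)) hlt

lemma exists_mul_alpha_pow_eq_mul_alpha_pow {φ ψ : IncM} {t : ℕ+} (h : ∀ p < t, φ.1 p = ψ.1 p) :
    ∃ a b : ℕ, φ * alpha t ^ a = ψ * alpha t ^ b := by
  obtain ⟨lφ, Nφ, hφ⟩ := φ.2.2
  obtain ⟨lψ, Nψ, hψ⟩ := ψ.2.2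
  refine ⟨Nφ + Nψ + lψ, Nφ + Nψ + lφ, Subtype.ext (funext fun p => ?_)⟩
  change φ.1 ((alpha t ^ _).1 p) = ψ.1 ((alpha t ^ _).1 p)
  rcases lt_or_ge p t with hp | hp
  · rw [alpha_pow_apply_of_lt _ hp, alpha_pow_apply_of_lt _ hp, h p hp]
  · have ha := coe_alpha_pow_apply_of_le (Nφ + Nψ + lψ : ℕ) hp
    have hb := coe_alpha_pow_apply_of_le (Nφ + Nψ + lφ : ℕ) hp
    apply PNat.eq
    rw [hφ _ (by rw [← PNat.coe_le_coe, ha]; omega), hψ _ (by rw [← PNat.coe_le_coe, hb]; omega),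
      ha, hb]
    ring

end IncM

section IncAlgModule

variable {k : Type*} [Field k] {M : Type*} [AddCommGroup M] [Module (IncAlg k) M]

lemma ofInc_mul_smul (σ τ : IncM) (v : M) :
    ofInc k (σ * τ) • v = ofInc k σ • ofInc k τ • v := by
  simp only [ofInc, map_mul, mul_smul]

lemma ofInc_one_smul (v : M) : ofInc k 1 • v = v := by
  rw [ofInc, map_one, one_smul]

lemma ofInc_pow_smul_of_smul_eq {σ : IncM} {v : M} (h : ofInc k σ • v = v) (c : ℕ) :
    ofInc k (σ ^ c) • v = v := by
  simp only [ofInc, map_pow] at h ⊢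
  induction c with
  | zero => rw [pow_zero, one_smul]
  | succ c ih => rw [pow_succ, mul_smul, h, ih]

lemma ofInc_smul_eq_of_eqOn {v : M} {t : ℕ+} (ht : ofInc k (alpha t) • v = v) {φ ψ : IncM}
    (h : ∀ p < t, φ.1 p = ψ.1 p) : ofInc k φ • v = ofInc k ψ • v := by
  obtain ⟨a, b, hab⟩ := IncM.exists_mul_alpha_pow_eq_mul_alpha_pow h
  calc ofInc k φ • v = ofInc k φ • ofInc k (alpha t ^ a) • v := by
        rw [ofInc_pow_smul_of_smul_eq ht]
    _ = ofInc k ψ • ofInc k (alpha t ^ b) • v := by rw [← ofInc_mul_smul, ← ofInc_mul_smul, hab]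
    _ = ofInc k ψ • v := by rw [ofInc_pow_smul_of_smul_eq ht]

lemma ofInc_smul_eq_zero_of_apply_ne {v : M} {j : ℕ+}
    (hkill : ∀ i ≤ j, ofInc k (alpha i) • v = 0) {σ : IncM} (h : σ.1 j ≠ j) :
    ofInc k σ • v = 0 := by
  obtain ⟨i, hij, τ, rfl⟩ := σ.exists_eq_mul_alpha_of_apply_ne h
  rw [ofInc_mul_smul, hkill i hij, smul_zero]

lemma ofInc_smul_eq_ite {n : ℕ} {z : M}
    (hkill : ∀ j : ℕ+, (j : ℕ) ≤ n → ofInc k (alpha j) • z = 0)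
    (hfix : ∀ j : ℕ+, n < (j : ℕ) → ofInc k (alpha j) • z = z) (σ : IncM) :
    ofInc k σ • z = if fixesNat σ n then z else 0 := by
  split_ifs with hσ
  · refine (ofInc_smul_eq_of_eqOn (t := n.succPNat) (ψ := 1) (hfix _ (by simp))
      fun p hp => ?_).trans (ofInc_one_smul z)
    rw [← PNat.coe_lt_coe, Nat.succPNat_coe] at hp
    have hn : 0 < n := by have := p.pos; omega
    exact σ.apply_eq_self_of_le (hσ hn) (PNat.coe_le_coe _ _ |>.1 (by simp; omega))
  · obtain ⟨hn, hmoved⟩ : ∃ hn : 0 < n, σ.1 ⟨n, hn⟩ ≠ ⟨n, hn⟩ := by simpa [fixesNat] using hσ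
    exact ofInc_smul_eq_zero_of_apply_ne hkill hmoved

lemma smul_algebraMap_smul_eq {n : ℕ} {z : M}
    (hz : ∀ σ : IncM, ofInc k σ • z = if fixesNat σ n then z else 0) (a : IncAlg k) (x : k) :
    a • algebraMap k (IncAlg k) x • z =
      algebraMap k (IncAlg k) ((bRep k n).asAlgebraHom a x) • z := by
  induction a using MonoidAlgebra.induction_on with
  | of σ =>
    rw [← mul_smul, ← Algebra.commutes, mul_smul, hz σ, Representation.asAlgebraHom_of]
    split_ifs with hσ <;> simp [bRep, hσ]
  | add a b ha hb => rw [add_smul, ha, hb, map_add, LinearMap.add_apply, map_add, add_smul]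
  | smul r a ha =>
    rw [map_smul, LinearMap.smul_apply, smul_eq_mul, map_mul, Algebra.smul_def, mul_smul, ha,
      mul_smul]

def BMod.lift (n : ℕ) (z : M)
    (hz : ∀ σ : IncM, ofInc k σ • z = if fixesNat σ n then z else 0) :
    BMod k n →ₗ[IncAlg k] M where
  toFun x := algebraMap k (IncAlg k) ((bRep k n).asModuleEquiv x) • z
  map_add' x y := by rw [map_add, map_add, add_smul]
  map_smul' a x := by
    rw [Representation.asModuleEquiv_map_smul, RingHom.id_apply, smul_algebraMap_smul_eq hz]

end IncAlgModule

section SimpleModule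

variable {k : Type*} [Field k] {M : Type*} [AddCommGroup M] [Module (IncAlg k) M]
  [IsSimpleModule (IncAlg k) M]

lemma ofInc_alpha_pow_smul_ne_zero {v : M} {m : ℕ+}
    (hkill : ∀ i < m, ofInc k (alpha i) • v = 0) (hm : ofInc k (alpha m) • v ≠ 0) (c : ℕ) :
    ofInc k (alpha m ^ c) • v ≠ 0 := by
  induction c with
  | zero =>
    intro h0
    rw [pow_zero, ofInc_one_smul] at h0
    exact hm (by rw [h0, smul_zero])
  | succ c ih =>
    rcases c.eq_zero_or_pos with rfl | hc
    · simpa using hm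
    intro hzero
    obtain ⟨a, ha⟩ := exists_smul_eq_of_ne_zero (R := IncAlg k) ih v
    have hsandwich : ∀ σ : IncM, ofInc k (alpha m ^ c * σ * alpha m ^ c) • v = 0 := by
      intro σ
      by_cases hσ : ∀ p < m, σ.1 p = p
      · have hfix : ∀ p < m, (alpha m ^ c * σ * alpha m ^ c).1 p = p := fun p hp => by
          simp only [IncM.mul_apply, IncM.alpha_pow_apply_of_lt c hp, hσ p hp]
        have hbig : (m : ℕ) + (c + 1) ≤ (alpha m ^ c * σ * alpha m ^ c).1 m := by
          have h1 := IncM.coe_alpha_pow_apply_of_le c (le_refl m)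
          have h2 := σ.le_apply ((alpha m ^ c).1 m)
          rw [IncM.mul_apply, IncM.mul_apply,
            IncM.coe_alpha_pow_apply_of_le c (((alpha m ^ c).le_apply m).trans h2)]
          rw [← PNat.coe_le_coe] at h2
          omega
        obtain ⟨τ, hτ⟩ := IncM.exists_eq_mul_alpha_pow hfix hbig
        rw [hτ, ofInc_mul_smul, hzero, smul_zero]
      · push Not at hσ
        obtain ⟨j, hjm, hj⟩ := hσ
        exact ofInc_smul_eq_zero_of_apply_ne (fun i hi => hkill i (hi.trans_lt hjm))
          (IncM.mul_mul_apply_ne _ _ (IncM.alpha_pow_apply_of_lt c hjm) hj)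
    apply ih
    calc ofInc k (alpha m ^ c) • v = (ofInc k (alpha m ^ c) * a) • ofInc k (alpha m ^ c) • v := by
          rw [mul_smul, ha]
      _ = (0 * a) • (0 : M) := MonoidAlgebra.mul_smul_eq_mul_smul_of_forall_of (fun σ => by
          rw [mul_smul, ← ofInc_mul_smul, ← ofInc_mul_smul, hsandwich, zero_mul, zero_smul]) a
      _ = 0 := smul_zero _

lemma ofInc_alpha_smul_eq_self_of_le {v : M} {m t : ℕ+}
    (hkill : ∀ i < m, ofInc k (alpha i) • v = 0) (hm : ofInc k (alpha m) • v ≠ 0)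
    (ht : ∀ j, t ≤ j → ofInc k (alpha j) • v = v) {j : ℕ+} (hj : m ≤ j) :
    ofInc k (alpha j) • v = v := by
  rcases le_or_gt t j with htj | hjt
  · exact ht j htj
  obtain ⟨a, ha⟩ :=
    exists_smul_eq_of_ne_zero (R := IncAlg k) (ofInc_alpha_pow_smul_ne_zero hkill hm t) v
  -- `α_m^t` pushes every point `≥ m` beyond `t`, where `α_j` and `α_t` agree
  have hsandwich : ∀ σ : IncM, ofInc k (alpha j * σ * alpha m ^ (t : ℕ)) • v =
      ofInc k (alpha t * σ * alpha m ^ (t : ℕ)) • v := by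
    intro σ
    by_cases hσ : ∀ p < m, σ.1 p = p
    · refine ofInc_smul_eq_of_eqOn (ht t le_rfl) fun p _ => ?_
      simp only [IncM.mul_apply]
      apply IncM.alpha_apply_eq_alpha_apply
      rcases lt_or_ge p m with hpm | hpm
      · rw [IncM.alpha_pow_apply_of_lt _ hpm, hσ p hpm]
        exact iff_of_true (hpm.trans_le hj) (hpm.trans_le (hj.trans hjt.le))
      · have h1 := IncM.coe_alpha_pow_apply_of_le t hpm
        have h2 := σ.le_apply ((alpha m ^ (t : ℕ)).1 p)
        rw [← PNat.coe_le_coe] at h2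
        rw [← PNat.coe_lt_coe] at hjt
        refine iff_of_false ?_ ?_ <;> rw [← PNat.coe_lt_coe] <;> omega
    · push Not at hσ
      obtain ⟨i, him, hi⟩ := hσ
      have hkill' : ∀ i' ≤ i, ofInc k (alpha i') • v = 0 :=
        fun i' hi' => hkill i' (hi'.trans_lt him)
      rw [ofInc_smul_eq_zero_of_apply_ne hkill'
          (IncM.mul_mul_apply_ne _ _ (IncM.alpha_pow_apply_of_lt _ him) hi),
        ofInc_smul_eq_zero_of_apply_ne hkill'
          (IncM.mul_mul_apply_ne _ _ (IncM.alpha_pow_apply_of_lt _ him) hi)]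
  calc ofInc k (alpha j) • v = (ofInc k (alpha j) * a) • ofInc k (alpha m ^ (t : ℕ)) • v := by
        rw [mul_smul, ha]
    _ = (ofInc k (alpha t) * a) • ofInc k (alpha m ^ (t : ℕ)) • v :=
        MonoidAlgebra.mul_smul_eq_mul_smul_of_forall_of (fun σ => by
          rw [mul_smul, mul_smul, ← ofInc_mul_smul, ← ofInc_mul_smul, ← ofInc_mul_smul,
            ← ofInc_mul_smul, hsandwich]) a
    _ = v := by rw [mul_smul, ha, ht t le_rfl]

lemma exists_alpha_eigenvector (hsm : IsSmoothMod k M) :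
    ∃ (n : ℕ) (z : M), z ≠ 0 ∧ (∀ j : ℕ+, (j : ℕ) ≤ n → ofInc k (alpha j) • z = 0) ∧
      ∀ j : ℕ+, n < (j : ℕ) → ofInc k (alpha j) • z = z := by
  have hex : ∃ n, ∃ v : M, v ≠ 0 ∧ ∀ j : ℕ+, n < (j : ℕ) → ofInc k (alpha j) • v = v := by
    have := IsSimpleModule.nontrivial (IncAlg k) M
    obtain ⟨v, hv⟩ := exists_ne (0 : M)
    obtain ⟨n, hn⟩ := hsm v
    exact ⟨n, v, hv, fun j hj => hn _ (Submonoid.subset_closure ⟨j, hj, rfl⟩)⟩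
  obtain ⟨v, hv, hfix⟩ := Nat.find_spec hex
  refine ⟨Nat.find hex, v, hv, fun j hj => ?_, hfix⟩
  by_contra hj0
  have hne : ∃ i : ℕ+, ofInc k (alpha i) • v ≠ 0 := ⟨j, hj0⟩
  obtain ⟨m, hm, hkill, hmj⟩ : ∃ m : ℕ+, ofInc k (alpha m) • v ≠ 0 ∧
      (∀ i < m, ofInc k (alpha i) • v = 0) ∧ m ≤ j :=
    ⟨PNat.find hne, PNat.find_spec hne, fun i hi => not_not.1 (PNat.find_min hne hi),
      PNat.find_min' hne hj0⟩
  rw [← PNat.coe_le_coe] at hmj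
  refine Nat.find_min hex (m := m - 1) (by have := m.pos; omega) ⟨v, hv, fun i hi => ?_⟩
  refine ofInc_alpha_smul_eq_self_of_le hkill hm (t := (Nat.find hex).succPNat)
    (fun i' hi' => hfix i' ?_) ?_
  · rw [← PNat.coe_le_coe, Nat.succPNat_coe] at hi'
    omega
  · rw [← PNat.coe_le_coe]
    omega

lemma BMod.bijective_lift {n : ℕ} {z : M} (hz0 : z ≠ 0)
    (hz : ∀ σ : IncM, ofInc k σ • z = if fixesNat σ n then z else 0) :
    Function.Bijective (BMod.lift n z hz) := by
  have hone : BMod.lift n z hz ((bRep k n).asModuleEquiv.symm 1) = z := by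
    rw [BMod.lift, LinearMap.coe_mk, AddHom.coe_mk, LinearEquiv.apply_symm_apply, map_one,
      one_smul]
  refine ⟨(injective_iff_map_eq_zero _).2 fun x hx => ?_,
    LinearMap.surjective_of_ne_zero fun h => hz0 (by rw [← hone, h, LinearMap.zero_apply])⟩
  by_contra hx0
  have hx0' : (bRep k n).asModuleEquiv x ≠ 0 := by simpa using hx0
  apply hz0
  calc z = algebraMap k (IncAlg k) ((bRep k n).asModuleEquiv x)⁻¹ •
        BMod.lift n z hz x := by
        rw [BMod.lift, LinearMap.coe_mk, AddHom.coe_mk, ← mul_smul, ← map_mul,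
          inv_mul_cancel₀ hx0', map_one, one_smul]
    _ = 0 := by rw [hx, smul_zero]

end SimpleModule

/-- Every simple smooth `k[I]`-module is isomorphic to `B^n` for
some `n ∈ ℕ`. -/
theorem simple_smooth_module_classification (k : Type*) [Field k]
    (M : Type*) [AddCommGroup M] [Module (IncAlg k) M]
    (hsm : IsSmoothMod k M) (hsimple : IsSimpleModule (IncAlg k) M) :
    ∃ n : ℕ, Nonempty (M ≃ₗ[IncAlg k] BMod k n) := by
  obtain ⟨n, z, hz0, hkill, hfix⟩ := exists_alpha_eigenvector hsm
  have hz := ofInc_smul_eq_ite hkill hfix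
  exact ⟨n, ⟨(LinearEquiv.ofBijective _ (BMod.bijective_lift hz0 hz)).symm⟩⟩

end
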